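/- arXiv:2003.07337 — 5 statements merged into one kernel-verified Lean document; each statement's English description precedes it below -/
import Mathlib

section
/- With the notation of the value-function difference identity, the remainder term satisfies ‖R‖∞ ≤ (γ/(1-γ))·‖Δ_P‖∞·‖γ(I-γP)⁻¹ Δ_P θ‖∞ + (γ/(1-γ)²)·‖Δ_P‖∞·‖Δ_r‖∞, where ‖M‖∞ denotes the maximum row ℓ₁-norm of a matrix M. Consequently, when r = r', one has ‖θ - θ'‖∞ ≥ (1 - γ‖Δ_P‖∞/(1-γ))₊ · ‖γ(I-γP)⁻¹ Δ_P θ‖∞. -/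
open Matrix BigOperators

/-- Maximum row `ℓ₁`-norm of a matrix (the `(1,∞)`-operator norm used in the paper). -/
noncomputable def maxRowL1 {D : ℕ} (M : Matrix (Fin D) (Fin D) ℝ) : ℝ :=
  ⨆ i, ∑ j, |M i j|

/-!
Write `B = 1 - γP`, `B' = 1 - γP'`, `Δ = P - P'` and `K = γ B'⁻¹ Δ`. The second resolvent identity
`B⁻¹ - B'⁻¹ = K B⁻¹` turns `R` into `K x + K B⁻¹ Δ_r` with `x = γ B⁻¹ Δ θ`, and, when `r = r'`,
turns `θ - θ'` into `K θ = x - K x`. For row-stochastic `P` the `∞`-operator norm of `γP` is at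
most `γ`, so the Neumann series gives `‖B⁻¹‖∞ ≤ 1/(1-γ)` and `‖K‖∞ ≤ γ‖Δ‖∞/(1-γ)`; both bounds
then follow from the triangle inequality.
-/

attribute [local instance] Matrix.linftyOpNormedAddCommGroup Matrix.linftyOpNormedRing
  Matrix.linftyOpNormedAlgebra

namespace Matrix

variable {n α : Type*} [Fintype n] [DecidableEq n]

theorem inv_one_sub_smul_sub_inv_one_sub_smul [CommRing α] {γ : α} {P P' : Matrix n n α}
    (hP : IsUnit (1 - γ • P)) (hP' : IsUnit (1 - γ • P')) :
    (1 - γ • P)⁻¹ - (1 - γ • P')⁻¹ = γ • ((1 - γ • P')⁻¹ * (P - P')) * (1 - γ • P)⁻¹ := by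
  have hdiff : 1 - γ • P - (1 - γ • P') = -(γ • (P - P')) := by rw [smul_sub]; abel
  rw [← neg_sub, inv_sub_inv (iff_of_true hP' hP), hdiff, Matrix.mul_neg, Matrix.neg_mul, neg_neg,
    Matrix.mul_smul, Matrix.smul_mul]

theorem linfty_opNorm_one_le : ‖(1 : Matrix n n ℝ)‖ ≤ 1 := by
  rw [← diagonal_one, linfty_opNorm_diagonal]
  exact (pi_norm_const_le (1 : ℝ)).trans_eq norm_one

theorem linfty_opNorm_le_one_of_mem_rowStochastic {P : Matrix n n ℝ}
    (hP : P ∈ rowStochastic ℝ n) : ‖P‖ ≤ 1 := by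
  rw [linfty_opNorm_def, NNReal.coe_le_one, Finset.sup_le_iff]
  intro i _
  rw [← NNReal.coe_le_one]
  push_cast
  simp only [Real.norm_eq_abs, abs_of_nonneg (nonneg_of_mem_rowStochastic hP)]
  exact (sum_row_of_mem_rowStochastic hP i).le

theorem linfty_opNorm_smul_le_of_mem_rowStochastic {P : Matrix n n ℝ}
    (hP : P ∈ rowStochastic ℝ n) {γ : ℝ} (hγ : 0 ≤ γ) : ‖γ • P‖ ≤ γ := by
  refine (norm_smul_le γ P).trans ?_
  rw [Real.norm_of_nonneg hγ]
  exact mul_le_of_le_one_right hγ (linfty_opNorm_le_one_of_mem_rowStochastic hP)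

theorem linfty_opNorm_inv_one_sub_le {A : Matrix n n ℝ} (hA : ‖A‖ < 1) :
    ‖(1 - A)⁻¹‖ ≤ (1 - ‖A‖)⁻¹ := by
  rw [nonsing_inv_eq_ringInverse, ← geom_series_eq_inverse A hA]
  linarith [tsum_geometric_le_of_norm_lt_one A hA, linfty_opNorm_one_le (n := n)]

theorem max_one_sub_mul_norm_le_norm_sub_mulVec {K : Matrix n n ℝ} {c : ℝ} (hK : ‖K‖ ≤ c)
    (x : n → ℝ) : max (1 - c) 0 * ‖x‖ ≤ ‖x - K *ᵥ x‖ := by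
  rcases le_total (1 - c) 0 with hc | hc
  · rw [max_eq_right hc, zero_mul]
    exact norm_nonneg _
  · have hKx : ‖K *ᵥ x‖ ≤ c * ‖x‖ := (linfty_opNorm_mulVec K x).trans (by gcongr)
    rw [max_eq_left hc]
    linarith [norm_sub_norm_le x (K *ᵥ x)]

section RowStochastic

variable {P : Matrix n n ℝ} (hP : P ∈ rowStochastic ℝ n) {γ : ℝ} (hγ0 : 0 ≤ γ) (hγ1 : γ < 1)
include hP hγ0 hγ1

theorem isUnit_one_sub_smul_of_mem_rowStochastic : IsUnit (1 - γ • P) :=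
  isUnit_one_sub_of_norm_lt_one
    ((linfty_opNorm_smul_le_of_mem_rowStochastic hP hγ0).trans_lt hγ1)

theorem linfty_opNorm_inv_one_sub_smul_le : ‖(1 - γ • P)⁻¹‖ ≤ (1 - γ)⁻¹ := by
  have hγP := linfty_opNorm_smul_le_of_mem_rowStochastic hP hγ0
  exact (linfty_opNorm_inv_one_sub_le (hγP.trans_lt hγ1)).trans
    (inv_anti₀ (by linarith) (by linarith))

theorem linfty_opNorm_smul_inv_one_sub_smul_mul_le (Δ : Matrix n n ℝ) :
    ‖γ • ((1 - γ • P)⁻¹ * Δ)‖ ≤ γ / (1 - γ) * ‖Δ‖ := by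
  calc ‖γ • ((1 - γ • P)⁻¹ * Δ)‖ ≤ γ * (‖(1 - γ • P)⁻¹‖ * ‖Δ‖) := by
        refine (norm_smul_le _ _).trans ?_
        rw [Real.norm_of_nonneg hγ0]
        gcongr
        exact norm_mul_le _ _
    _ ≤ γ * ((1 - γ)⁻¹ * ‖Δ‖) := by
        gcongr
        exact linfty_opNorm_inv_one_sub_smul_le hP hγ0 hγ1
    _ = γ / (1 - γ) * ‖Δ‖ := by ring

end RowStochastic

section Perturbation

variable {P P' : Matrix n n ℝ} (hP : P ∈ rowStochastic ℝ n) (hP' : P' ∈ rowStochastic ℝ n)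
  {γ : ℝ} (hγ0 : 0 ≤ γ) (hγ1 : γ < 1)
include hP hP' hγ0 hγ1

theorem inv_one_sub_smul_sub_inv_one_sub_smul_of_mem_rowStochastic :
    (1 - γ • P)⁻¹ - (1 - γ • P')⁻¹ = γ • ((1 - γ • P')⁻¹ * (P - P')) * (1 - γ • P)⁻¹ :=
  inv_one_sub_smul_sub_inv_one_sub_smul (isUnit_one_sub_smul_of_mem_rowStochastic hP hγ0 hγ1)
    (isUnit_one_sub_smul_of_mem_rowStochastic hP' hγ0 hγ1)

theorem norm_remainder_le (θ r r' : n → ℝ) :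
    ‖γ ^ 2 • (1 - γ • P')⁻¹ *ᵥ ((P - P') *ᵥ ((1 - γ • P)⁻¹ *ᵥ ((P - P') *ᵥ θ)))
        + ((1 - γ • P)⁻¹ - (1 - γ • P')⁻¹) *ᵥ (r - r')‖
      ≤ γ / (1 - γ) * ‖P - P'‖ * ‖γ • (1 - γ • P)⁻¹ *ᵥ ((P - P') *ᵥ θ)‖
        + γ / (1 - γ) ^ 2 * ‖P - P'‖ * ‖r - r'‖ := by
  have hres := inv_one_sub_smul_sub_inv_one_sub_smul_of_mem_rowStochastic hP hP' hγ0 hγ1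
  set B := (1 : Matrix n n ℝ) - γ • P
  set Δ := P - P'
  set x := γ • B⁻¹ *ᵥ (Δ *ᵥ θ)
  set K := γ • ((1 - γ • P')⁻¹ * Δ)
  have hK : ‖K‖ ≤ γ / (1 - γ) * ‖Δ‖ := linfty_opNorm_smul_inv_one_sub_smul_mul_le hP' hγ0 hγ1 Δ
  have hB : ‖B⁻¹‖ ≤ (1 - γ)⁻¹ := linfty_opNorm_inv_one_sub_smul_le hP hγ0 hγ1
  have hKv (v : n → ℝ) : ‖K *ᵥ v‖ ≤ γ / (1 - γ) * ‖Δ‖ * ‖v‖ :=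
    (linfty_opNorm_mulVec K v).trans (by gcongr)
  have hBv : ‖B⁻¹ *ᵥ (r - r')‖ ≤ (1 - γ)⁻¹ * ‖r - r'‖ :=
    (linfty_opNorm_mulVec _ _).trans (by gcongr)
  have h1γ : 0 < 1 - γ := by linarith
  have hc : 0 ≤ γ / (1 - γ) * ‖Δ‖ := by positivity
  have hR : γ ^ 2 • (1 - γ • P')⁻¹ *ᵥ (Δ *ᵥ (B⁻¹ *ᵥ (Δ *ᵥ θ))) + (B⁻¹ - (1 - γ • P')⁻¹) *ᵥ (r - r')
      = K *ᵥ x + K *ᵥ (B⁻¹ *ᵥ (r - r')) := by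
    rw [hres, ← mulVec_mulVec]
    congr 1
    simp only [K, x, Matrix.smul_mulVec, mulVec_smul, ← mulVec_mulVec, smul_smul, sq]
  calc _ ≤ ‖K *ᵥ x‖ + ‖K *ᵥ (B⁻¹ *ᵥ (r - r'))‖ := hR ▸ norm_add_le _ _
    _ ≤ γ / (1 - γ) * ‖Δ‖ * ‖x‖ + γ / (1 - γ) * ‖Δ‖ * ((1 - γ)⁻¹ * ‖r - r'‖) :=
      add_le_add (hKv x) ((hKv _).trans (mul_le_mul_of_nonneg_left hBv hc))
    _ = γ / (1 - γ) * ‖Δ‖ * ‖x‖ + γ / (1 - γ) ^ 2 * ‖Δ‖ * ‖r - r'‖ := by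
      field_simp

theorem max_mul_norm_le_norm_inv_mulVec_sub (r : n → ℝ) :
    max (1 - γ * ‖P - P'‖ / (1 - γ)) 0
        * ‖γ • (1 - γ • P)⁻¹ *ᵥ ((P - P') *ᵥ ((1 - γ • P)⁻¹ *ᵥ r))‖
      ≤ ‖(1 - γ • P)⁻¹ *ᵥ r - (1 - γ • P')⁻¹ *ᵥ r‖ := by
  have hres := inv_one_sub_smul_sub_inv_one_sub_smul_of_mem_rowStochastic hP hP' hγ0 hγ1
  set B := (1 : Matrix n n ℝ) - γ • P
  set Δ := P - P'
  set θ := B⁻¹ *ᵥ r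
  set x := γ • B⁻¹ *ᵥ (Δ *ᵥ θ)
  set K := γ • ((1 - γ • P')⁻¹ * Δ)
  have hKθ : θ - (1 - γ • P')⁻¹ *ᵥ r = K *ᵥ θ := by
    rw [← sub_mulVec, hres, ← mulVec_mulVec]
  have hKx : K *ᵥ x = x - K *ᵥ θ := by
    calc K *ᵥ x = (K * B⁻¹) *ᵥ (γ • Δ *ᵥ θ) := by
          simp only [x, mulVec_smul, ← mulVec_mulVec]
      _ = x - K *ᵥ θ := by
          rw [← hres, sub_mulVec]
          simp only [x, K, mulVec_smul, Matrix.smul_mulVec, ← mulVec_mulVec]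
  rw [hKθ, ← sub_sub_cancel x (K *ᵥ θ), ← hKx, mul_div_right_comm]
  exact max_one_sub_mul_norm_le_norm_sub_mulVec
    (linfty_opNorm_smul_inv_one_sub_smul_mul_le hP' hγ0 hγ1 Δ) x

end Perturbation

end Matrix

theorem maxRowL1_eq_linfty_opNorm {D : ℕ} (M : Matrix (Fin D) (Fin D) ℝ) :
    maxRowL1 M = ‖M‖ := by
  have hrow (i : Fin D) : ∑ j, |M i j| = (∑ j, ‖M i j‖₊ : NNReal) := by
    push_cast; rfl
  have h0 : 0 ≤ maxRowL1 M := Real.iSup_nonneg fun i => by positivity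
  refine le_antisymm (Real.iSup_le (fun i => ?_) (norm_nonneg M)) ?_
  · rw [linfty_opNorm_def, hrow, NNReal.coe_le_coe]
    exact Finset.le_sup (f := fun i => ∑ j, ‖M i j‖₊) (Finset.mem_univ i)
  · rw [linfty_opNorm_def, ← NNReal.coe_mk _ h0, NNReal.coe_le_coe, Finset.sup_le_iff]
    intro i _
    rw [← NNReal.coe_le_coe, ← hrow, NNReal.coe_mk]
    exact le_ciSup (f := fun i => ∑ j, |M i j|) (Set.finite_range _).bddAbove i

theorem remainder_bound_and_lower_bound {D : ℕ}
    (P P' : Matrix (Fin D) (Fin D) ℝ)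
    (hPnonneg : ∀ i j, 0 ≤ P i j) (hProw : ∀ i, ∑ j, P i j = 1)
    (hP'nonneg : ∀ i j, 0 ≤ P' i j) (hP'row : ∀ i, ∑ j, P' i j = 1)
    (r r' : Fin D → ℝ) (γ : ℝ) (hγ0 : 0 ≤ γ) (hγ1 : γ < 1)
    (θ θ' : Fin D → ℝ) (R : Fin D → ℝ)
    (hθ : θ = (1 - γ • P)⁻¹.mulVec r)
    (hθ' : θ' = (1 - γ • P')⁻¹.mulVec r')
    (hR : R = γ ^ 2 • (1 - γ • P')⁻¹.mulVec
          ((P - P').mulVec ((1 - γ • P)⁻¹.mulVec ((P - P').mulVec θ)))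
        + ((1 - γ • P)⁻¹ - (1 - γ • P')⁻¹).mulVec (r - r')) :
    ‖R‖ ≤ γ / (1 - γ) * maxRowL1 (P - P')
            * ‖γ • (1 - γ • P)⁻¹.mulVec ((P - P').mulVec θ)‖
          + γ / (1 - γ) ^ 2 * maxRowL1 (P - P') * ‖r - r'‖ ∧
    (r = r' →
      ‖θ - θ'‖ ≥ max (1 - γ * maxRowL1 (P - P') / (1 - γ)) 0
        * ‖γ • (1 - γ • P)⁻¹.mulVec ((P - P').mulVec θ)‖) := by
  have hP : P ∈ rowStochastic ℝ (Fin D) := mem_rowStochastic_iff_sum.2 ⟨hPnonneg, hProw⟩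
  have hP' : P' ∈ rowStochastic ℝ (Fin D) := mem_rowStochastic_iff_sum.2 ⟨hP'nonneg, hP'row⟩
  rw [maxRowL1_eq_linfty_opNorm]
  refine ⟨hR ▸ norm_remainder_le hP hP' hγ0 hγ1 θ r r', ?_⟩
  rintro rfl
  subst hθ hθ'
  exact max_mul_norm_le_norm_inv_mulVec_sub hP hP' hγ0 hγ1 r
end

section
/- For product probability measures, the squared Hellinger distance tensorizes and subadds: if P = ⊗ᵢ₌₁ⁿ Pᵢ and Q = ⊗ᵢ₌₁ⁿ Qᵢ, then H²(P, Q) = 1 - ∏ᵢ (1 - H²(Pᵢ, Qᵢ)) ≤ Σᵢ H²(Pᵢ, Qᵢ). -/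
open MeasureTheory BigOperators

/-- Squared Hellinger distance `H²(P,Q) = 1 - ∫ √(dP dQ)` between two measures. -/
noncomputable def helSq {Ω : Type*} [MeasurableSpace Ω] (P Q : Measure Ω) : ℝ :=
  1 - ∫ x, Real.sqrt ((P.rnDeriv (P + Q) x).toReal * (Q.rnDeriv (P + Q) x).toReal) ∂(P + Q)

/-!
Write `H² = 1 - A`, where the Hellinger affinity `A(P, Q) = ∫ √(p q) dν` does not depend on the
measure `ν` dominating `P` and `Q` with densities `p` and `q`. Taking `ν = ⊗ᵢ (Pᵢ + Qᵢ)`, the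
densities of the product measures are the products of the coordinate densities, so Fubini turns
`A(P, Q)` into `∏ᵢ A(Pᵢ, Qᵢ)`. AM–GM gives `A(Pᵢ, Qᵢ) ≤ 1`, so `hᵢ = H²(Pᵢ, Qᵢ) ∈ [0, 1]`, and
then `1 - ∏ᵢ (1 - hᵢ) ≤ ∑ᵢ hᵢ`.
-/

open scoped ENNReal

theorem Finset.one_sub_prod_one_sub_le_sum {ι R : Type*} [CommRing R] [LinearOrder R]
    [IsStrictOrderedRing R] (s : Finset ι) {f : ι → R} (h0 : ∀ i ∈ s, 0 ≤ f i)
    (h1 : ∀ i ∈ s, f i ≤ 1) : 1 - ∏ i ∈ s, (1 - f i) ≤ ∑ i ∈ s, f i := by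
  induction s using Finset.cons_induction with
  | empty => simp
  | cons j s hj ih =>
    simp only [Finset.mem_cons, forall_eq_or_imp] at h0 h1
    have hp : ∏ i ∈ s, (1 - f i) ≤ 1 :=
      prod_le_one (fun i hi ↦ sub_nonneg.2 (h1.2 i hi)) fun i hi ↦ sub_le_self _ (h0.2 i hi)
    rw [prod_cons, sum_cons]
    nlinarith [ih h0.2 h1.2, mul_le_of_le_one_right h0.1 hp]

namespace MeasureTheory

variable {ι : Type*} {α : ι → Type*} [∀ i, MeasurableSpace (α i)]

theorem lintegral_fin_nat_prod_eq_prod {n : ℕ} {E : Fin n → Type*} [∀ i, MeasurableSpace (E i)]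
    (μ : ∀ i, Measure (E i)) [∀ i, SigmaFinite (μ i)]
    {f : ∀ i, E i → ℝ≥0∞} (hf : ∀ i, Measurable (f i)) :
    ∫⁻ x, ∏ i, f i (x i) ∂Measure.pi μ = ∏ i, ∫⁻ x, f i x ∂μ i := by
  induction n with
  | zero => simp
  | succ n ih =>
    have hmp := (measurePreserving_piFinSuccAbove μ 0).symm
    rw [← hmp.lintegral_comp_emb (MeasurableEquiv.measurableEmbedding _)]
    simp_rw [MeasurableEquiv.piFinSuccAbove_symm_apply, Fin.insertNthEquiv,
      Fin.prod_univ_succ, Fin.insertNth_zero, Equiv.coe_fn_mk, Fin.cons_zero, Fin.cons_succ]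
    exact (lintegral_prod_mul (hf 0).aemeasurable (Finset.measurable_prod _ fun i _ ↦
      (hf i.succ).comp (measurable_pi_apply i)).aemeasurable).trans
      (congrArg _ (ih (fun i ↦ μ i.succ) fun i ↦ hf i.succ))

theorem lintegral_fintype_prod_eq_prod [Fintype ι] (μ : ∀ i, Measure (α i))
    [∀ i, SigmaFinite (μ i)] {f : ∀ i, α i → ℝ≥0∞} (hf : ∀ i, Measurable (f i)) :
    ∫⁻ x, ∏ i, f i (x i) ∂Measure.pi μ = ∏ i, ∫⁻ x, f i x ∂μ i := by
  let e := (Fintype.equivFin ι).symm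
  rw [← (measurePreserving_piCongrLeft μ e).lintegral_comp_emb
    (MeasurableEquiv.measurableEmbedding _)]
  simp_rw [← e.prod_comp, MeasurableEquiv.coe_piCongrLeft, Equiv.piCongrLeft_apply_apply]
  exact lintegral_fin_nat_prod_eq_prod _ fun i ↦ hf (e i)

namespace Measure

variable [Fintype ι] (P ν : ∀ i, Measure (α i)) [∀ i, SigmaFinite (P i)] [∀ i, SigmaFinite (ν i)]

theorem pi_eq_withDensity_prod_rnDeriv (hP : ∀ i, P i ≪ ν i) :
    Measure.pi P = (Measure.pi ν).withDensity fun x ↦ ∏ i, (P i).rnDeriv (ν i) (x i) := by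
  refine pi_eq fun s hs ↦ ?_
  have hind : (Set.univ.pi s).indicator (fun x ↦ ∏ i, (P i).rnDeriv (ν i) (x i))
      = fun x ↦ ∏ i, (s i).indicator ((P i).rnDeriv (ν i)) (x i) := by
    ext x
    classical simp only [Set.indicator_apply, Set.mem_univ_pi, Fintype.prod_ite_zero]
  rw [withDensity_apply _ (.univ_pi hs), ← lintegral_indicator (.univ_pi hs), hind,
    lintegral_fintype_prod_eq_prod ν fun i ↦ (measurable_rnDeriv _ _).indicator (hs i)]
  refine Finset.prod_congr rfl fun i _ ↦ ?_
  rw [lintegral_indicator (hs i), ← withDensity_apply _ (hs i), withDensity_rnDeriv_eq _ _ (hP i)]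

theorem rnDeriv_pi (hP : ∀ i, P i ≪ ν i) :
    (Measure.pi P).rnDeriv (Measure.pi ν) =ᵐ[Measure.pi ν]
      fun x ↦ ∏ i, (P i).rnDeriv (ν i) (x i) := by
  rw [pi_eq_withDensity_prod_rnDeriv P ν hP]
  exact rnDeriv_withDensity _ <|
    Finset.measurable_prod _ fun i _ ↦ (measurable_rnDeriv _ _).comp (measurable_pi_apply i)

theorem pi_absolutelyContinuous_pi (hP : ∀ i, P i ≪ ν i) : Measure.pi P ≪ Measure.pi ν := by
  rw [pi_eq_withDensity_prod_rnDeriv P ν hP]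
  exact withDensity_absolutelyContinuous _ _

end Measure

end MeasureTheory

section Hellinger

open Measure

variable {Ω : Type*} [MeasurableSpace Ω]

noncomputable def hellingerAffinity (P Q : Measure Ω) : ℝ :=
  ∫ x, √((P.rnDeriv (P + Q) x).toReal * (Q.rnDeriv (P + Q) x).toReal) ∂(P + Q)

theorem helSq_eq_one_sub_hellingerAffinity (P Q : Measure Ω) :
    helSq P Q = 1 - hellingerAffinity P Q := rfl

theorem hellingerAffinity_nonneg (P Q : Measure Ω) : 0 ≤ hellingerAffinity P Q :=
  integral_nonneg fun _ ↦ Real.sqrt_nonneg _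

theorem hellingerAffinity_le_one (P Q : Measure Ω) [IsProbabilityMeasure P]
    [IsProbabilityMeasure Q] : hellingerAffinity P Q ≤ 1 := by
  set a := fun x ↦ (P.rnDeriv (P + Q) x).toReal
  set b := fun x ↦ (Q.rnDeriv (P + Q) x).toReal
  have am_gm : ∀ x, √(a x * b x) ≤ (a x + b x) / 2 := fun x ↦
    Real.sqrt_le_iff.2 ⟨by positivity, by nlinarith [sq_nonneg (a x - b x)]⟩
  have ha : ∫ x, a x ∂(P + Q) = 1 := by
    simp [a, integral_toReal_rnDeriv (AbsolutelyContinuous.rfl.add_right Q)]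
  have hb : ∫ x, b x ∂(P + Q) = 1 := by
    simp [b, integral_toReal_rnDeriv (AbsolutelyContinuous.rfl.add_right' P)]
  calc hellingerAffinity P Q ≤ ∫ x, (a x + b x) / 2 ∂(P + Q) :=
        integral_mono_of_nonneg (.of_forall fun _ ↦ Real.sqrt_nonneg _)
          ((integrable_toReal_rnDeriv.add integrable_toReal_rnDeriv).div_const 2)
          (.of_forall am_gm)
    _ = 1 := by
        rw [integral_div, integral_add integrable_toReal_rnDeriv integrable_toReal_rnDeriv, ha, hb]
        norm_num

theorem helSq_nonneg (P Q : Measure Ω) [IsProbabilityMeasure P] [IsProbabilityMeasure Q] :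
    0 ≤ helSq P Q :=
  sub_nonneg.2 (hellingerAffinity_le_one P Q)

theorem helSq_le_one (P Q : Measure Ω) : helSq P Q ≤ 1 :=
  sub_le_self _ (hellingerAffinity_nonneg P Q)

theorem hellingerAffinity_eq_integral_rnDeriv {P Q ν : Measure Ω} [SigmaFinite P]
    [SigmaFinite Q] [SigmaFinite ν] (hP : P ≪ ν) (hQ : Q ≪ ν) :
    hellingerAffinity P Q = ∫ x, √((P.rnDeriv ν x).toReal * (Q.rnDeriv ν x).toReal) ∂ν := by
  rw [hellingerAffinity, ← integral_rnDeriv_smul (hP.add_left hQ)]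
  refine integral_congr_ae ?_
  filter_upwards [rnDeriv_mul_rnDeriv (ν := P + Q) (κ := ν) (AbsolutelyContinuous.rfl.add_right Q),
    rnDeriv_mul_rnDeriv (ν := P + Q) (κ := ν) (AbsolutelyContinuous.rfl.add_right' P)]
    with x hPx hQx
  rw [← hPx, ← hQx, Pi.mul_apply, Pi.mul_apply, ENNReal.toReal_mul, ENNReal.toReal_mul,
    smul_eq_mul, mul_mul_mul_comm, Real.sqrt_mul' _ (mul_self_nonneg _),
    Real.sqrt_mul_self ENNReal.toReal_nonneg, mul_comm]

theorem hellingerAffinity_pi {ι : Type*} [Fintype ι] {α : ι → Type*} [∀ i, MeasurableSpace (α i)]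
    (P Q : ∀ i, Measure (α i)) [∀ i, SigmaFinite (P i)] [∀ i, SigmaFinite (Q i)] :
    hellingerAffinity (Measure.pi P) (Measure.pi Q) = ∏ i, hellingerAffinity (P i) (Q i) := by
  set ν := fun i ↦ P i + Q i
  have hP : ∀ i, P i ≪ ν i := fun i ↦ AbsolutelyContinuous.rfl.add_right (Q i)
  have hQ : ∀ i, Q i ≪ ν i := fun i ↦ AbsolutelyContinuous.rfl.add_right' (P i)
  rw [hellingerAffinity_eq_integral_rnDeriv (pi_absolutelyContinuous_pi P ν hP)
    (pi_absolutelyContinuous_pi Q ν hQ)]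
  calc _ = ∫ x, ∏ i, √(((P i).rnDeriv (ν i) (x i)).toReal * ((Q i).rnDeriv (ν i) (x i)).toReal)
        ∂Measure.pi ν := by
        refine integral_congr_ae ?_
        filter_upwards [rnDeriv_pi P ν hP, rnDeriv_pi Q ν hQ] with x hPx hQx
        rw [hPx, hQx, ENNReal.toReal_prod, ENNReal.toReal_prod, ← Finset.prod_mul_distrib,
          Real.sqrt_prod _ fun i _ ↦ by positivity]
    _ = ∏ i, hellingerAffinity (P i) (Q i) := integral_fintype_prod_eq_prod (𝕜 := ℝ)
        fun i y ↦ √(((P i).rnDeriv (ν i) y).toReal * ((Q i).rnDeriv (ν i) y).toReal)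

end Hellinger

theorem hellinger_tensorization {n : ℕ} {α : Fin n → Type*}
    [∀ i, MeasurableSpace (α i)]
    (P Q : ∀ i, Measure (α i))
    [∀ i, IsProbabilityMeasure (P i)] [∀ i, IsProbabilityMeasure (Q i)] :
    helSq (Measure.pi P) (Measure.pi Q) = 1 - ∏ i, (1 - helSq (P i) (Q i)) ∧
    helSq (Measure.pi P) (Measure.pi Q) ≤ ∑ i, helSq (P i) (Q i) := by
  have hprod : helSq (Measure.pi P) (Measure.pi Q) = 1 - ∏ i, (1 - helSq (P i) (Q i)) := by
    simp only [helSq_eq_one_sub_hellingerAffinity, sub_sub_cancel, hellingerAffinity_pi]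
  refine ⟨hprod, hprod ▸ Finset.one_sub_prod_one_sub_le_sum _ ?_ ?_⟩
  · exact fun i _ ↦ helSq_nonneg (P i) (Q i)
  · exact fun i _ ↦ helSq_le_one (P i) (Q i)
end

section
/- Let P ∈ ℝ^{D×D} be row-stochastic with strictly positive entries wherever relevant, θ* ∈ ℝ^D, γ ∈ [0,1), U = (I-γP)⁻¹, θ̄ = Pθ*, and fix ℓ̄ ∈ [D]. Define ν² = Σᵢ U²_{ℓ̄,i} σᵢ²(θ*) where σᵢ²(θ*) = Σⱼ P_{i,j}(θ*ⱼ - θ̄ᵢ)². Assume ν > 0 and let N satisfy ν√N ≥ 2·span(θ*)/(1-γ), where span(θ*) = maxⱼθ*ⱼ - minⱼθ*ⱼ. Then the matrix P̄ with entries P̄_{i,j} = P_{i,j}(1 + (1/(ν√(2N))) U_{ℓ̄,i}(θ*ⱼ - θ̄ᵢ)) is row-stochastic, satisfies Σ_{i,j} (P̄_{i,j} - P_{i,j})²/P_{i,j} = 1/(2N), has maximum row ℓ₁-distance ‖P̄ - P‖∞ ≤ 1/√(2N), and satisfies ‖γ(I-γP)⁻¹(P̄-P)θ*‖∞ ≥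 γν/√(2N). -/
open Matrix BigOperators

lemma aux_det_ne_zero {D : ℕ} (P : Matrix (Fin D) (Fin D) ℝ)
    (hpos : ∀ i j, 0 ≤ P i j) (hrow : ∀ i, ∑ j, P i j = 1)
    {γ : ℝ} (hγ0 : 0 ≤ γ) (hγ1 : γ < 1) : (1 - γ • P).det ≠ 0 := by
  intro h
  obtain ⟨v, hv0, hv⟩ := (Matrix.exists_mulVec_eq_zero_iff).2 h
  have hvi : ∀ i, v i = γ * ∑ j, P i j * v j := by
    intro i
    have := congrFun hv i
    rw [Matrix.sub_mulVec, Matrix.one_mulVec, Matrix.smul_mulVec] at this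
    simp only [Pi.sub_apply, Pi.smul_apply, smul_eq_mul, Pi.zero_apply, sub_eq_zero,
      Matrix.mulVec, dotProduct] at this
    exact this
  obtain ⟨j0, hj0⟩ := Function.ne_iff.1 hv0
  obtain ⟨i, -, hi⟩ := Finset.exists_max_image Finset.univ (fun k => |v k|)
    ⟨j0, Finset.mem_univ j0⟩
  have hipos : 0 < |v i| := lt_of_lt_of_le (abs_pos.2 hj0) (hi j0 (Finset.mem_univ j0))
  have hle : |v i| ≤ γ * |v i| := by
    calc |v i| = γ * |∑ j, P i j * v j| := by rw [hvi i, abs_mul, abs_of_nonneg hγ0]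
    _ ≤ γ * ∑ j, |P i j * v j| := by
        gcongr; exact Finset.abs_sum_le_sum_abs _ _
    _ ≤ γ * ∑ j, P i j * |v i| := by
        gcongr with j; rw [abs_mul, abs_of_nonneg (hpos i j)]
        exact mul_le_mul_of_nonneg_left (hi j (Finset.mem_univ j)) (hpos i j)
    _ = γ * |v i| := by rw [← Finset.sum_mul, hrow i, one_mul]
  nlinarith

lemma aux_inv_rowsum {D : ℕ} (P : Matrix (Fin D) (Fin D) ℝ)
    (hpos : ∀ i j, 0 ≤ P i j) (hrow : ∀ i, ∑ j, P i j = 1)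
    {γ : ℝ} (hγ0 : 0 ≤ γ) (hγ1 : γ < 1) (i : Fin D) :
    ∑ j, ((1 - γ • P)⁻¹) i j = 1 / (1 - γ) := by
  have hdet := aux_det_ne_zero P hpos hrow hγ0 hγ1
  have hUA : (1 - γ • P)⁻¹ * (1 - γ • P) = 1 :=
    Matrix.nonsing_inv_mul _ (isUnit_iff_ne_zero.2 hdet)
  have h1 : ∑ j, ((1 - γ • P)⁻¹ * (1 - γ • P)) i j = 1 := by
    rw [hUA]; simp [Matrix.one_apply]
  have h2 : ∑ j, ((1 - γ • P)⁻¹ * (1 - γ • P)) i j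
      = (1 - γ) * ∑ k, ((1 - γ • P)⁻¹) i k := by
    simp only [Matrix.mul_apply]
    rw [Finset.sum_comm]
    rw [Finset.mul_sum]
    congr 1; ext k
    simp only [Matrix.sub_apply, Matrix.smul_apply, smul_eq_mul]
    rw [← Finset.mul_sum]
    have : ∑ j, ((1 : Matrix (Fin D) (Fin D) ℝ) k j - γ * P k j) = 1 - γ := by
      rw [Finset.sum_sub_distrib, ← Finset.mul_sum, hrow k]
      simp [Matrix.one_apply]
    rw [this]; ring
  rw [h2] at h1
  rw [eq_div_iff (by intro h; rw [sub_eq_zero] at h; exact absurd h.symm (ne_of_lt hγ1))]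
  linarith

lemma aux_pow_entry {D : ℕ} (P : Matrix (Fin D) (Fin D) ℝ)
    (hpos : ∀ i j, 0 ≤ P i j) (hrow : ∀ i, ∑ j, P i j = 1)
    {γ : ℝ} (hγ0 : 0 ≤ γ) (n : ℕ) :
    (∀ i j, 0 ≤ ((γ • P) ^ n) i j) ∧ (∀ i, ∑ j, ((γ • P) ^ n) i j = γ ^ n) := by
  induction n with
  | zero => constructor
            · intro i j; simp [Matrix.one_apply]; positivity
            · intro i; simp [Matrix.one_apply]
  | succ n ih =>
    constructor
    · intro i j
      rw [pow_succ, Matrix.mul_apply]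
      apply Finset.sum_nonneg
      intro k _
      refine mul_nonneg (ih.1 i k) ?_
      simp only [Matrix.smul_apply, smul_eq_mul]
      exact mul_nonneg hγ0 (hpos k j)
    · intro i
      rw [pow_succ]
      simp only [Matrix.mul_apply]
      rw [Finset.sum_comm]
      have : ∀ k, ∑ j, ((γ • P) ^ n) i k * (γ • P) k j = ((γ • P) ^ n) i k * γ := by
        intro k
        rw [← Finset.mul_sum]
        congr 1
        simp only [Matrix.smul_apply, smul_eq_mul]
        rw [← Finset.mul_sum, hrow k, mul_one]
      rw [Finset.sum_congr rfl (fun k _ => this k), ← Finset.sum_mul, ih.2 i, pow_succ]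

lemma aux_inv_nonneg {D : ℕ} (P : Matrix (Fin D) (Fin D) ℝ)
    (hpos : ∀ i j, 0 ≤ P i j) (hrow : ∀ i, ∑ j, P i j = 1)
    {γ : ℝ} (hγ0 : 0 ≤ γ) (hγ1 : γ < 1) (i j : Fin D) :
    0 ≤ ((1 - γ • P)⁻¹) i j := by
  set U := (1 - γ • P)⁻¹ with hUdef
  have hdet := aux_det_ne_zero P hpos hrow hγ0 hγ1
  have hAU : (1 - γ • P) * U = 1 := Matrix.mul_nonsing_inv _ (isUnit_iff_ne_zero.2 hdet)
  have hU1 : U = 1 + (γ • P) * U := by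
    rw [sub_mul, one_mul] at hAU
    rw [sub_eq_iff_eq_add] at hAU
    exact hAU
  have hgeom : ∀ n, U = (∑ k ∈ Finset.range n, (γ • P) ^ k) + (γ • P) ^ n * U := by
    intro n
    induction n with
    | zero => simp
    | succ n ihn =>
      rw [Finset.sum_range_succ]
      calc U = (∑ k ∈ Finset.range n, (γ • P) ^ k) + (γ • P) ^ n * U := ihn
        _ = (∑ k ∈ Finset.range n, (γ • P) ^ k) + (γ • P) ^ n * (1 + (γ • P) * U) := by
            rw [← hU1]
        _ = (∑ k ∈ Finset.range n, (γ • P) ^ k) + (γ • P) ^ n + (γ • P) ^ (n + 1) * U := by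
            rw [mul_add, mul_one, pow_succ, mul_assoc, ← add_assoc]
  set C := ∑ k, |U k j| with hC
  have hC0 : 0 ≤ C := Finset.sum_nonneg fun k _ => abs_nonneg _
  have hlow : ∀ n : ℕ, -(γ ^ n * C) ≤ U i j := by
    intro n
    have h1 := congrFun (congrFun (hgeom n) i) j
    have h2 : 0 ≤ (∑ k ∈ Finset.range n, (γ • P) ^ k) i j := by
      rw [Matrix.sum_apply]
      refine Finset.sum_nonneg fun k _ => (aux_pow_entry P hpos hrow hγ0 k).1 i j
    have h3 : -(γ ^ n * C) ≤ ((γ • P) ^ n * U) i j := by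
      rw [Matrix.mul_apply, hC, Finset.mul_sum, ← Finset.sum_neg_distrib]
      refine Finset.sum_le_sum fun k _ => ?_
      have hb := (aux_pow_entry P hpos hrow hγ0 n)
      have he : ((γ • P) ^ n) i k ≤ γ ^ n := by
        have := hb.2 i
        calc ((γ • P) ^ n) i k ≤ ∑ l, ((γ • P) ^ n) i l :=
          Finset.single_le_sum (fun l _ => hb.1 i l) (Finset.mem_univ k)
        _ = γ ^ n := hb.2 i
      calc -(γ ^ n * |U k j|) ≤ -(((γ • P) ^ n) i k * |U k j|) := by
            apply neg_le_neg; exact mul_le_mul_of_nonneg_right he (abs_nonneg _)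
        _ ≤ ((γ • P) ^ n) i k * U k j := by
            rw [← mul_neg]
            exact mul_le_mul_of_nonneg_left (neg_abs_le _) (hb.1 i k)
    have := Pi.add_apply ((∑ k ∈ Finset.range n, (γ • P) ^ k) i) (((γ • P) ^ n * U) i) j
    rw [h1]
    calc -(γ ^ n * C) ≤ 0 + ((γ • P) ^ n * U) i j := by linarith
      _ ≤ _ := by
        show _ ≤ ((∑ k ∈ Finset.range n, (γ • P) ^ k) + (γ • P) ^ n * U) i j
        simp only [Matrix.add_apply]
        linarith
  by_contra hneg
  push_neg at hneg
  rcases eq_or_lt_of_le hC0 with hCe | hCl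
  · have := hlow 0; rw [← hCe] at this; simp at this; linarith
  · obtain ⟨n, hn⟩ := exists_pow_lt_of_lt_one (x := -U i j / C)
      (div_pos (by linarith) hCl) hγ1
    have : γ ^ n * C < -U i j := (lt_div_iff₀ hCl).1 hn
    linarith [hlow n]

theorem hardest_alternative_construction {D : ℕ} (hD : 0 < D)
    (P : Matrix (Fin D) (Fin D) ℝ)
    (hPpos : ∀ i j, 0 < P i j) (hProw : ∀ i, ∑ j, P i j = 1)
    (γ : ℝ) (hγ0 : 0 ≤ γ) (hγ1 : γ < 1)
    (θstar : Fin D → ℝ) (ℓbar : Fin D)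
    (U : Matrix (Fin D) (Fin D) ℝ) (hU : U = (1 - γ • P)⁻¹)
    (θbar : Fin D → ℝ) (hθbar : θbar = P.mulVec θstar)
    (ν : ℝ)
    (hν : ν = Real.sqrt (∑ i, (U ℓbar i) ^ 2 * ∑ j, P i j * (θstar j - θbar i) ^ 2))
    (hνpos : 0 < ν)
    (N : ℝ) (hN0 : 0 < N)
    (hN : 2 * ((⨆ j, θstar j) - ⨅ j, θstar j) / (1 - γ) ≤ ν * Real.sqrt N)
    (Pbar : Matrix (Fin D) (Fin D) ℝ)
    (hPbar : ∀ i j, Pbar i j =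
      P i j * (1 + (1 / (ν * Real.sqrt (2 * N))) * U ℓbar i * (θstar j - θbar i))) :
    (∀ i j, 0 ≤ Pbar i j) ∧
    (∀ i, ∑ j, Pbar i j = 1) ∧
    (∑ i, ∑ j, (Pbar i j - P i j) ^ 2 / P i j = 1 / (2 * N)) ∧
    ((⨆ i, ∑ j, |Pbar i j - P i j|) ≤ 1 / Real.sqrt (2 * N)) ∧
    (γ * ν / Real.sqrt (2 * N) ≤
      ‖γ • (1 - γ • P)⁻¹.mulVec ((Pbar - P).mulVec θstar)‖) := by
  haveI : Nonempty (Fin D) := ⟨⟨0, hD⟩⟩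
  have hP0 : ∀ i j, 0 ≤ P i j := fun i j => (hPpos i j).le
  have hγs : (0:ℝ) < 1 - γ := by linarith
  -- facts about U
  have hUnn : ∀ i, 0 ≤ U ℓbar i := fun i => hU ▸ aux_inv_nonneg P hP0 hProw hγ0 hγ1 ℓbar i
  have hUrow : ∑ i, U ℓbar i = 1 / (1 - γ) := hU ▸ aux_inv_rowsum P hP0 hProw hγ0 hγ1 ℓbar
  have hUb : ∀ i, U ℓbar i ≤ 1 / (1 - γ) := by
    intro i
    rw [← hUrow]
    exact Finset.single_le_sum (fun k _ => hUnn k) (Finset.mem_univ i)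
  -- sqrt facts
  have h2N : (0:ℝ) < 2 * N := by linarith
  have hs2N : 0 < Real.sqrt (2 * N) := Real.sqrt_pos.2 h2N
  have hsN : 0 < Real.sqrt N := Real.sqrt_pos.2 hN0
  have hsq2N : Real.sqrt (2 * N) ^ 2 = 2 * N := Real.sq_sqrt h2N.le
  have hsNle : Real.sqrt N ≤ Real.sqrt (2 * N) := Real.sqrt_le_sqrt (by linarith)
  set c : ℝ := 1 / (ν * Real.sqrt (2 * N)) with hc
  have hc0 : 0 < c := by positivity
  -- θstar bounds
  set Mx := ⨆ j, θstar j with hMx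
  set mn := ⨅ j, θstar j with hmn
  have hle : ∀ j, θstar j ≤ Mx := fun j =>
    le_ciSup (Set.Finite.bddAbove (Set.finite_range _)) j
  have hge : ∀ j, mn ≤ θstar j := fun j =>
    ciInf_le (Set.Finite.bddBelow (Set.finite_range _)) j
  have hθb : ∀ i, θbar i = ∑ j, P i j * θstar j := by
    intro i; rw [hθbar]; simp [Matrix.mulVec, dotProduct]
  have hθbub : ∀ i, θbar i ≤ Mx := by
    intro i
    rw [hθb i, ← (by rw [← Finset.sum_mul, hProw i, one_mul] : ∑ j, P i j * Mx = Mx)]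
    exact Finset.sum_le_sum fun j _ => mul_le_mul_of_nonneg_left (hle j) (hP0 i j)
  have hθblb : ∀ i, mn ≤ θbar i := by
    intro i
    rw [hθb i, ← (by rw [← Finset.sum_mul, hProw i, one_mul] : ∑ j, P i j * mn = mn)]
    exact Finset.sum_le_sum fun j _ => mul_le_mul_of_nonneg_left (hge j) (hP0 i j)
  have habs : ∀ i j, |θstar j - θbar i| ≤ Mx - mn := by
    intro i j
    rw [abs_le]
    constructor <;> [linarith [hge j, hθbub i]; linarith [hle j, hθblb i]]
  have hzero : ∀ i, ∑ j, P i j * (θstar j - θbar i) = 0 := by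
    intro i
    have : ∑ j, P i j * (θstar j - θbar i)
        = (∑ j, P i j * θstar j) - (∑ j, P i j) * θbar i := by
      rw [Finset.sum_mul]
      rw [← Finset.sum_sub_distrib]
      exact Finset.sum_congr rfl fun j _ => by ring
    rw [this, hProw i, hθb i]; ring
  set σ2 : Fin D → ℝ := fun i => ∑ j, P i j * (θstar j - θbar i) ^ 2 with hσ2
  have hσ2nn : ∀ i, 0 ≤ σ2 i := fun i =>
    Finset.sum_nonneg fun j _ => mul_nonneg (hP0 i j) (sq_nonneg _)
  have hν2 : ν ^ 2 = ∑ i, (U ℓbar i) ^ 2 * σ2 i := by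
    rw [hν]
    exact Real.sq_sqrt (Finset.sum_nonneg fun i _ => mul_nonneg (sq_nonneg _) (hσ2nn i))
  -- key smallness bound
  have hkey : ∀ i j, |c * U ℓbar i * (θstar j - θbar i)| ≤ 1 / 2 := by
    intro i j
    have h1 : |c * U ℓbar i * (θstar j - θbar i)| = c * U ℓbar i * |θstar j - θbar i| := by
      rw [abs_mul, abs_of_nonneg (mul_nonneg hc0.le (hUnn i))]
    rw [h1]
    have hMm : 0 ≤ Mx - mn := by
      have := hle ⟨0, hD⟩; have := hge ⟨0, hD⟩; linarith
    calc c * U ℓbar i * |θstar j - θbar i| ≤ c * (1 / (1 - γ)) * (Mx - mn) := by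
          apply mul_le_mul (by gcongr; exact hUb i) (habs i j) (abs_nonneg _)
          positivity
      _ ≤ c * (ν * Real.sqrt N / 2) := by
          rw [mul_assoc]
          apply mul_le_mul_of_nonneg_left _ hc0.le
          have h := (div_le_iff₀ hγs).1 hN
          rw [div_mul_eq_mul_div, one_mul, div_le_div_iff₀ hγs (by norm_num : (0:ℝ) < 2)]
          linarith
      _ = Real.sqrt N / (2 * Real.sqrt (2 * N)) := by
          rw [hc]; field_simp
      _ ≤ 1 / 2 := by
          rw [div_le_div_iff₀ (by positivity) (by norm_num : (0:ℝ) < 2)]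
          nlinarith [hsNle, hs2N]
  have hnonneg : ∀ i j, 0 ≤ Pbar i j := by
    intro i j
    rw [hPbar]
    apply mul_nonneg (hP0 i j)
    have := abs_le.1 (hkey i j)
    linarith [this.1]
  refine ⟨hnonneg, ?_, ?_, ?_, ?_⟩
  · -- row sums
    intro i
    calc ∑ j, Pbar i j
        = ∑ j, (P i j + (c * U ℓbar i) * (P i j * (θstar j - θbar i))) := by
          refine Finset.sum_congr rfl fun j _ => ?_; rw [hPbar]; ring
      _ = 1 + (c * U ℓbar i) * ∑ j, P i j * (θstar j - θbar i) := by
          rw [Finset.sum_add_distrib, hProw i, ← Finset.mul_sum]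
      _ = 1 := by rw [hzero i]; ring
  · -- chi squared
    have hterm : ∀ i j, (Pbar i j - P i j) ^ 2 / P i j
        = c ^ 2 * ((U ℓbar i) ^ 2 * (P i j * (θstar j - θbar i) ^ 2)) := by
      intro i j
      rw [hPbar]
      have hne := (hPpos i j).ne'
      field_simp
      ring
    calc ∑ i, ∑ j, (Pbar i j - P i j) ^ 2 / P i j
        = c ^ 2 * ∑ i, (U ℓbar i) ^ 2 * σ2 i := by
          rw [Finset.mul_sum]
          refine Finset.sum_congr rfl fun i _ => ?_
          rw [hσ2, Finset.mul_sum, Finset.mul_sum]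
          exact Finset.sum_congr rfl fun j _ => hterm i j
      _ = c ^ 2 * ν ^ 2 := by rw [hν2]
      _ = 1 / (2 * N) := by
          rw [hc, div_pow, mul_pow, hsq2N, one_pow]
          rw [div_mul_eq_mul_div, one_mul, div_eq_div_iff (by positivity) (by positivity)]
          ring
  · -- sup of row L1 norms
    apply ciSup_le
    intro i
    have hCS : ∑ j, P i j * |θstar j - θbar i| ≤ Real.sqrt (σ2 i) := by
      rw [Real.le_sqrt (Finset.sum_nonneg fun j _ => mul_nonneg (hP0 i j) (abs_nonneg _))
        (hσ2nn i)]
      calc (∑ j, P i j * |θstar j - θbar i|) ^ 2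
          = (∑ j, Real.sqrt (P i j) * (Real.sqrt (P i j) * |θstar j - θbar i|)) ^ 2 := by
            congr 1
            refine Finset.sum_congr rfl fun j _ => ?_
            symm
            rw [← mul_assoc, Real.mul_self_sqrt (hP0 i j)]
        _ ≤ (∑ j, Real.sqrt (P i j) ^ 2) * ∑ j, (Real.sqrt (P i j) * |θstar j - θbar i|) ^ 2 :=
            Finset.sum_mul_sq_le_sq_mul_sq _ _ _
        _ = σ2 i := by
            have h1 : ∑ j, Real.sqrt (P i j) ^ 2 = 1 := by
              rw [← hProw i]
              exact Finset.sum_congr rfl fun j _ => Real.sq_sqrt (hP0 i j)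
            rw [h1, one_mul, hσ2]
            refine Finset.sum_congr rfl fun j _ => ?_
            rw [mul_pow, Real.sq_sqrt (hP0 i j), sq_abs]
    have huσ : U ℓbar i * Real.sqrt (σ2 i) ≤ ν := by
      rw [hν]
      apply Real.le_sqrt_of_sq_le
      rw [mul_pow, Real.sq_sqrt (hσ2nn i)]
      calc (U ℓbar i) ^ 2 * σ2 i ≤ ∑ k, (U ℓbar k) ^ 2 * σ2 k :=
          Finset.single_le_sum (f := fun k => (U ℓbar k) ^ 2 * σ2 k)
            (fun k _ => mul_nonneg (sq_nonneg _) (hσ2nn k)) (Finset.mem_univ i)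
        _ = _ := rfl
    calc ∑ j, |Pbar i j - P i j|
        = ∑ j, (c * U ℓbar i) * (P i j * |θstar j - θbar i|) := by
          refine Finset.sum_congr rfl fun j _ => ?_
          rw [hPbar]
          have : P i j * (1 + c * U ℓbar i * (θstar j - θbar i)) - P i j
              = (c * U ℓbar i) * (P i j * (θstar j - θbar i)) := by ring
          rw [this, abs_mul, abs_mul, abs_mul, abs_of_nonneg hc0.le,
            abs_of_nonneg (hUnn i), abs_of_nonneg (hP0 i j)]
      _ = (c * U ℓbar i) * ∑ j, P i j * |θstar j - θbar i| := by rw [Finset.mul_sum]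
      _ ≤ (c * U ℓbar i) * Real.sqrt (σ2 i) := by
          exact mul_le_mul_of_nonneg_left hCS (mul_nonneg hc0.le (hUnn i))
      _ = c * (U ℓbar i * Real.sqrt (σ2 i)) := by ring
      _ ≤ c * ν := mul_le_mul_of_nonneg_left huσ hc0.le
      _ = 1 / Real.sqrt (2 * N) := by
          rw [hc]; field_simp
  · -- lower bound on the norm
    have hw : ∀ i, ((Pbar - P).mulVec θstar) i = (c * U ℓbar i) * σ2 i := by
      intro i
      show ∑ j, (Pbar - P) i j * θstar j = _
      calc ∑ j, (Pbar - P) i j * θstar j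
          = ∑ j, ((c * U ℓbar i) * (P i j * (θstar j - θbar i) ^ 2)
              + ((c * U ℓbar i) * θbar i) * (P i j * (θstar j - θbar i))) := by
            refine Finset.sum_congr rfl fun j _ => ?_
            rw [Matrix.sub_apply, hPbar]
            ring
        _ = (c * U ℓbar i) * σ2 i
            + ((c * U ℓbar i) * θbar i) * ∑ j, P i j * (θstar j - θbar i) := by
            rw [Finset.sum_add_distrib, ← Finset.mul_sum, ← Finset.mul_sum, hσ2]
        _ = (c * U ℓbar i) * σ2 i := by rw [hzero i]; ring
    have hv : (γ • (1 - γ • P)⁻¹.mulVec ((Pbar - P).mulVec θstar)) ℓbar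
        = γ * (c * ν ^ 2) := by
      rw [Pi.smul_apply, smul_eq_mul]
      congr 1
      show ∑ i, ((1 - γ • P)⁻¹) ℓbar i * ((Pbar - P).mulVec θstar) i = c * ν ^ 2
      rw [hν2, Finset.mul_sum]
      refine Finset.sum_congr rfl fun i _ => ?_
      rw [hw i, ← hU]
      ring
    have hval : γ * ν / Real.sqrt (2 * N) = γ * (c * ν ^ 2) := by
      rw [hc]
      field_simp
    rw [hval]
    calc γ * (c * ν ^ 2) = (γ • (1 - γ • P)⁻¹.mulVec ((Pbar - P).mulVec θstar)) ℓbar :=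
        hv.symm
      _ ≤ |(γ • (1 - γ • P)⁻¹.mulVec ((Pbar - P).mulVec θstar)) ℓbar| := le_abs_self _
      _ ≤ ‖γ • (1 - γ • P)⁻¹.mulVec ((Pbar - P).mulVec θstar)‖ := by
        rw [← Real.norm_eq_abs]
        exact norm_le_pi_norm _ ℓbar
end

section
/- For a row-stochastic matrix P with γ ∈ [0,1) and θ* = (I-γP)⁻¹r: if θ̂ denotes the unique fixed point of the operator J(θ) = T(θ) - T(θ̄) + T̃(θ̄), where T(θ) = r + γPθ and T̃(θ) = r̂ + γP̂θ for some vector r̂ and matrix P̂, then θ̂ - θ* = (I - γP)⁻¹ (r̃ - r) where r̃ = r̂ + γ(P̂ - P)θ̄. Moreover ‖θ̂ - θ*‖∞ ≤ ‖(I-γP)⁻¹(r̂ - r)‖∞ + γ‖(I-γP)⁻¹(P̂-P)θ*‖∞ + (γ/(1-γ))‖(P̂-P)(θ̄ - θ*)‖∞. -/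
open Matrix BigOperators

/-! A row-stochastic `P` is non-expansive in `ℓ∞`, so `‖(1 - γ • P) *ᵥ u‖ ≥ (1 - γ) ‖u‖`. Hence
`1 - γ • P` is invertible with `‖(1 - γ • P)⁻¹ *ᵥ v‖ ≤ ‖v‖ / (1 - γ)`. Since `θ̂` and `θ*` solve
the linear systems `(1 - γ • P) θ = r̃` and `(1 - γ • P) θ = r`, the identity follows; writing
`r̃ - r = (r̂ - r) + γ (P̂ - P) θ* + γ (P̂ - P)(θ̄ - θ*)` and bounding the last term with the
resolvent bound gives the estimate. -/

namespace Matrix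

variable {n : Type*} [Fintype n] [DecidableEq n]

theorem norm_mulVec_le_of_mem_rowStochastic {P : Matrix n n ℝ} (hP : P ∈ rowStochastic ℝ n)
    (v : n → ℝ) : ‖P *ᵥ v‖ ≤ ‖v‖ := by
  refine (pi_norm_le_iff_of_nonneg (norm_nonneg v)).2 fun i => ?_
  calc ‖(P *ᵥ v) i‖ = |∑ j, P i j * v j| := rfl
    _ ≤ ∑ j, |P i j * v j| := Finset.abs_sum_le_sum_abs _ _
    _ ≤ ∑ j, P i j * ‖v‖ := Finset.sum_le_sum fun j _ => by
        rw [abs_mul, abs_of_nonneg (nonneg_of_mem_rowStochastic hP)]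
        exact mul_le_mul_of_nonneg_left (norm_le_pi_norm v j) (nonneg_of_mem_rowStochastic hP)
    _ = ‖v‖ := by rw [← Finset.sum_mul, sum_row_of_mem_rowStochastic hP, one_mul]

section Nonexpansive

variable {P : Matrix n n ℝ} (hP : ∀ v, ‖P *ᵥ v‖ ≤ ‖v‖) {γ : ℝ} (hγ0 : 0 ≤ γ)
include hP hγ0

theorem one_sub_mul_norm_le_norm_one_sub_smul_mulVec (u : n → ℝ) :
    (1 - γ) * ‖u‖ ≤ ‖(1 - γ • P) *ᵥ u‖ := by
  have hPu : ‖γ • P *ᵥ u‖ ≤ γ * ‖u‖ := by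
    rw [norm_smul, Real.norm_of_nonneg hγ0]
    exact mul_le_mul_of_nonneg_left (hP u) hγ0
  have hsplit : u = (1 - γ • P) *ᵥ u + γ • P *ᵥ u := by
    rw [sub_mulVec, one_mulVec, smul_mulVec, sub_add_cancel]
  have := norm_add_le ((1 - γ • P) *ᵥ u) (γ • P *ᵥ u)
  rw [← hsplit] at this
  linarith

theorem isUnit_one_sub_smul (hγ1 : γ < 1) : IsUnit (1 - γ • P) := by
  refine mulVec_injective_iff_isUnit.1 fun u w huw => ?_
  have hbound := one_sub_mul_norm_le_norm_one_sub_smul_mulVec hP hγ0 (u - w)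
  rw [mulVec_sub, huw, sub_self, norm_zero] at hbound
  have : ‖u - w‖ ≤ 0 := nonpos_of_mul_nonpos_right hbound (sub_pos.2 hγ1)
  exact sub_eq_zero.1 (norm_le_zero_iff.1 this)

theorem norm_inv_one_sub_smul_mulVec_le (hγ1 : γ < 1) (v : n → ℝ) :
    ‖(1 - γ • P)⁻¹ *ᵥ v‖ ≤ ‖v‖ / (1 - γ) := by
  have hdet := (isUnit_iff_isUnit_det _).1 (isUnit_one_sub_smul hP hγ0 hγ1)
  have := one_sub_mul_norm_le_norm_one_sub_smul_mulVec hP hγ0 ((1 - γ • P)⁻¹ *ᵥ v)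
  rw [mulVec_mulVec, mul_nonsing_inv _ hdet, one_mulVec] at this
  rw [le_div_iff₀ (sub_pos.2 hγ1)]
  linarith

end Nonexpansive

end Matrix

theorem recentered_fixed_point_error {D : ℕ}
    (P Phat : Matrix (Fin D) (Fin D) ℝ)
    (hPnonneg : ∀ i j, 0 ≤ P i j) (hProw : ∀ i, ∑ j, P i j = 1)
    (γ : ℝ) (hγ0 : 0 ≤ γ) (hγ1 : γ < 1)
    (r rhat : Fin D → ℝ) (θbar : Fin D → ℝ)
    (θstar : Fin D → ℝ) (hθstar : θstar = (1 - γ • P)⁻¹.mulVec r)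
    (rtil : Fin D → ℝ) (hrtil : rtil = rhat + γ • (Phat - P).mulVec θbar)
    (θhat : Fin D → ℝ) (hfix : rtil + γ • P.mulVec θhat = θhat) :
    θhat - θstar = (1 - γ • P)⁻¹.mulVec (rtil - r) ∧
    ‖θhat - θstar‖ ≤
      ‖(1 - γ • P)⁻¹.mulVec (rhat - r)‖
      + γ * ‖(1 - γ • P)⁻¹.mulVec ((Phat - P).mulVec θstar)‖
      + (γ / (1 - γ)) * ‖(Phat - P).mulVec (θbar - θstar)‖ := by
  have hP : ∀ v, ‖P *ᵥ v‖ ≤ ‖v‖ :=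
    norm_mulVec_le_of_mem_rowStochastic (mem_rowStochastic_iff_sum.2 ⟨hPnonneg, hProw⟩)
  have hdet := (isUnit_iff_isUnit_det _).1 (isUnit_one_sub_smul hP hγ0 hγ1)
  have hθstar' : (1 - γ • P) *ᵥ θstar = r := by
    rw [hθstar, mulVec_mulVec, mul_nonsing_inv _ hdet, one_mulVec]
  have hθhat' : (1 - γ • P) *ᵥ θhat = rtil := by
    rw [sub_mulVec, one_mulVec, smul_mulVec, sub_eq_iff_eq_add, hfix]
  have hident : θhat - θstar = (1 - γ • P)⁻¹ *ᵥ (rtil - r) := by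
    rw [← hθstar', ← hθhat', ← mulVec_sub, mulVec_mulVec, nonsing_inv_mul _ hdet, one_mulVec]
  refine ⟨hident, ?_⟩
  have hdecomp : rtil - r = (rhat - r) + γ • (Phat - P) *ᵥ θstar
      + γ • (Phat - P) *ᵥ (θbar - θstar) := by
    rw [hrtil, mulVec_sub]
    module
  have hsplit : θhat - θstar = (1 - γ • P)⁻¹ *ᵥ (rhat - r)
      + γ • (1 - γ • P)⁻¹ *ᵥ ((Phat - P) *ᵥ θstar)
      + γ • (1 - γ • P)⁻¹ *ᵥ ((Phat - P) *ᵥ (θbar - θstar)) := by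
    rw [hident, hdecomp, mulVec_add, mulVec_add, mulVec_smul, mulVec_smul]
  have hlast := norm_inv_one_sub_smul_mulVec_le hP hγ0 hγ1 ((Phat - P) *ᵥ (θbar - θstar))
  rw [hsplit]
  refine (norm_add₃_le).trans ?_
  rw [norm_smul, norm_smul, Real.norm_of_nonneg hγ0, div_mul_eq_mul_div, mul_div_assoc]
  gcongr
end

section
/- Let {αₖ}ₖ≥₁ ⊂ (0,1) be a stepsize sequence satisfying (1 - αₖ₊₁)αₖ ≤ αₖ₊₁ for all k ≥ 1. Let {Wₖ}ₖ≥₀ be independent random variables, each with log E[exp(s Wₖ)] ≤ s²b²/8 for all s ∈ ℝ (sub-Gaussian with parameter b/2). Define V₁ = α₁W₀ and Vₖ₊₁ = (1-αₖ₊₁)Vₖ + αₖ₊₁Wₖ (with the process indexed consistently). Then for all k, log E[exp(s Vₖ)] ≤ s²αₖb²/8 for all s ∈ ℝ. -/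
/-!
Call `X` sub-Gaussian with variance proxy `c` when `mgf X μ t ≤ exp (c t² / 2)` for every `t`.
The proxy scales by `r²` under `X ↦ r X` and is additive over independent sums, because the mgf
of an independent sum factors. Since `V k` is a function of `W 0, …, W (k-1)`, it is independent
of `W k`, so by induction `V (k+1)` has proxy `(1 - α (k+1))² α k c + α (k+1)² c`, where `c` is
the proxy `b² / 4` of the noise. The stepsize condition multiplied by `1 - α (k+1) ≥ 0` gives
`(1 - α (k+1))² α k ≤ (1 - α (k+1)) α (k+1)`, so this proxy is at most `α (k+1) c`.
-/

open MeasureTheory ProbabilityTheory Real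

section

variable {Ω : Type*} [MeasurableSpace Ω] {μ : Measure Ω}

namespace ProbabilityTheory

/-- Unlike `HasSubgaussianMGF`, no integrability of `exp (t * X)` is required: where it fails,
`mgf X μ t = 0` and the bound holds by convention. -/
def MgfBoundedByGaussian (X : Ω → ℝ) (c : ℝ) (μ : Measure Ω) : Prop :=
  ∀ t : ℝ, mgf X μ t ≤ exp (c * t ^ 2 / 2)

namespace MgfBoundedByGaussian

variable {X Y : Ω → ℝ} {c c' cX cY : ℝ}

lemma mono (h : MgfBoundedByGaussian X c μ) (hc : c ≤ c') : MgfBoundedByGaussian X c' μ :=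
  fun t => (h t).trans <| exp_le_exp.mpr <| by gcongr

lemma const_mul (h : MgfBoundedByGaussian X c μ) (r : ℝ) :
    MgfBoundedByGaussian (fun ω => r * X ω) (r ^ 2 * c) μ := fun t => by
  rw [mgf_const_mul]
  convert h (r * t) using 2
  ring

lemma add_of_indepFun (hX : MgfBoundedByGaussian X cX μ) (hY : MgfBoundedByGaussian Y cY μ)
    (hXY : IndepFun X Y μ) (hXm : AEStronglyMeasurable X μ) (hYm : AEStronglyMeasurable Y μ) :
    MgfBoundedByGaussian (fun ω => X ω + Y ω) (cX + cY) μ := fun t => by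
  calc mgf (X + Y) μ t = mgf X μ t * mgf Y μ t := hXY.mgf_add' hXm hYm
    _ ≤ exp (cX * t ^ 2 / 2) * exp (cY * t ^ 2 / 2) :=
      mul_le_mul (hX t) (hY t) mgf_nonneg (exp_pos _).le
    _ = exp ((cX + cY) * t ^ 2 / 2) := by rw [← exp_add]; ring_nf

lemma one_sub_mul_add_mul {a a' : ℝ} (hX : MgfBoundedByGaussian X (a * c) μ)
    (hY : MgfBoundedByGaussian Y c μ) (hXY : IndepFun X Y μ) (hXm : AEStronglyMeasurable X μ)
    (hYm : AEStronglyMeasurable Y μ) (hc : 0 ≤ c) (ha' : a' ≤ 1) (hstep : (1 - a') * a ≤ a') :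
    MgfBoundedByGaussian (fun ω => (1 - a') * X ω + a' * Y ω) (a' * c) μ := by
  refine ((hX.const_mul _).add_of_indepFun (hY.const_mul _)
    (hXY.comp (measurable_const_mul _) (measurable_const_mul _))
    (hXm.const_mul _) (hYm.const_mul _)).mono ?_
  have hproxy : (1 - a') ^ 2 * a + a' ^ 2 ≤ a' := by
    nlinarith [mul_le_mul_of_nonneg_left hstep (sub_nonneg.mpr ha')]
  nlinarith [mul_le_mul_of_nonneg_right hproxy hc]

end MgfBoundedByGaussian

lemma iIndepFun.indepFun_of_measurable_natural {ι β γ : Type*} [LinearOrder ι]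
    [MeasurableSpace β] [NormedAddCommGroup β] [BorelSpace β] [MeasurableSpace γ]
    {W : ι → Ω → β} (hW : ∀ i, StronglyMeasurable (W i)) (hind : iIndepFun W μ)
    {Y : Ω → γ} {i j : ι} (hY : Measurable[Filtration.natural W hW i] Y) (hij : i < j) :
    IndepFun Y (W j) μ := by
  rw [IndepFun_iff_Indep]
  exact indep_of_indep_of_le_left (hind.indep_comap_natural_of_lt hW hij).symm hY.comap_le

end ProbabilityTheory

lemma stronglyAdapted_natural_of_recursion {W V : ℕ → Ω → ℝ}
    (hW : ∀ i, StronglyMeasurable (W i)) (α : ℕ → ℝ)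
    (hV1 : V 1 = fun ω => α 1 * W 0 ω)
    (hVrec : ∀ k, 1 ≤ k →
      V (k + 1) = fun ω => (1 - α (k + 1)) * V k ω + α (k + 1) * W k ω) :
    StronglyAdapted (Filtration.natural W hW) (fun n => V (n + 1)) := by
  have hWad := Filtration.stronglyAdapted_natural hW
  intro n
  induction n with
  | zero => simp only [zero_add, hV1]; exact (hWad 0).const_mul _
  | succ n ih =>
    simp only [hVrec (n + 1) n.succ_pos]
    exact ((ih.mono ((Filtration.natural W hW).mono n.le_succ)).const_mul _).add
      ((hWad (n + 1)).const_mul _)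

end

theorem subgaussian_recursion_mgf_bound_general {Ω : Type*} [MeasurableSpace Ω]
    (μ : Measure Ω)
    (b : ℝ)
    (W : ℕ → Ω → ℝ) (hWmeas : ∀ k, Measurable (W k))
    (hWindep : iIndepFun W μ)
    (hWmgf : ∀ k, ∀ s : ℝ,
      ∫ ω, Real.exp (s * W k ω) ∂μ ≤ Real.exp (s ^ 2 * b ^ 2 / 8))
    (α : ℕ → ℝ) (hα : ∀ k, 1 ≤ k → 0 < α k ∧ α k < 1)
    (hαcond : ∀ k, 1 ≤ k → (1 - α (k + 1)) * α k ≤ α (k + 1))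
    (V : ℕ → Ω → ℝ)
    (hV1 : V 1 = fun ω => α 1 * W 0 ω)
    (hVrec : ∀ k, 1 ≤ k →
      V (k + 1) = fun ω => (1 - α (k + 1)) * V k ω + α (k + 1) * W k ω) :
    ∀ k, 1 ≤ k → ∀ s : ℝ,
      ∫ ω, Real.exp (s * V k ω) ∂μ ≤ Real.exp (s ^ 2 * α k * b ^ 2 / 8) := by
  have hWsm k : StronglyMeasurable (W k) := (hWmeas k).stronglyMeasurable
  have hWbd k : MgfBoundedByGaussian (W k) (b ^ 2 / 4) μ := fun s =>
    (hWmgf k s).trans_eq (by ring_nf)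
  have hVad := stronglyAdapted_natural_of_recursion hWsm α hV1 hVrec
  have hVbd n : MgfBoundedByGaussian (V (n + 1)) (α (n + 1) * (b ^ 2 / 4)) μ := by
    induction n with
    | zero =>
      obtain ⟨hα0, hα1⟩ := hα 1 le_rfl
      rw [hV1]
      exact ((hWbd 0).const_mul _).mono (by gcongr; nlinarith)
    | succ n ih =>
      have hindep : IndepFun (V (n + 1)) (W (n + 1)) μ :=
        hWindep.indepFun_of_measurable_natural hWsm (hVad n).measurable n.lt_succ_self
      rw [hVrec (n + 1) n.succ_pos]
      exact ih.one_sub_mul_add_mul (hWbd _) hindep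
        ((hVad n).mono ((Filtration.natural W hWsm).le n)).aestronglyMeasurable
        (hWsm _).aestronglyMeasurable (by positivity) (hα (n + 2) (by omega)).2.le
        (hαcond (n + 1) n.succ_pos)
  intro k hk s
  obtain ⟨n, rfl⟩ : ∃ n, k = n + 1 := ⟨k - 1, by omega⟩
  exact (hVbd n s).trans_eq (by ring_nf)

theorem subgaussian_recursion_mgf_bound {Ω : Type*} [MeasurableSpace Ω]
    (μ : Measure Ω) [IsProbabilityMeasure μ]
    (b : ℝ) (hb : 0 < b)
    (W : ℕ → Ω → ℝ) (hWmeas : ∀ k, Measurable (W k))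
    (hWindep : iIndepFun W μ)
    (hWmgf : ∀ k, ∀ s : ℝ,
      ∫ ω, Real.exp (s * W k ω) ∂μ ≤ Real.exp (s ^ 2 * b ^ 2 / 8))
    (α : ℕ → ℝ) (hα : ∀ k, 1 ≤ k → 0 < α k ∧ α k < 1)
    (hαcond : ∀ k, 1 ≤ k → (1 - α (k + 1)) * α k ≤ α (k + 1))
    (V : ℕ → Ω → ℝ)
    (hV1 : V 1 = fun ω => α 1 * W 0 ω)
    (hVrec : ∀ k, 1 ≤ k →
      V (k + 1) = fun ω => (1 - α (k + 1)) * V k ω + α (k + 1) * W k ω) :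
    ∀ k, 1 ≤ k → ∀ s : ℝ,
      ∫ ω, Real.exp (s * V k ω) ∂μ ≤ Real.exp (s ^ 2 * α k * b ^ 2 / 8) :=
  subgaussian_recursion_mgf_bound_general μ b W hWmeas hWindep hWmgf α hα hαcond V hV1 hVrec
end
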